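/- arXiv:1506.07379 — 4 statements merged into one kernel-verified Lean document; each statement's English description precedes it below -/
import Mathlib

section
/- Let M ≥ 2 and n ≥ M be integers. Let w, z_1, ..., z_{M−1} be nonzero complex numbers with 0 ≤ arg w ≤ π/M and 0 ≤ arg z_i ≤ π/M for i = 1, ..., M−1, let a_M, a_{M+1}, ..., a_n be positive reals, and define recursively z_i := a_i w + 1/(z_{i−1} · z_{i−2} ⋯ z_{i−(M−1)}) for i = M, ..., n, assuming each z_i so defined is nonzero. Suppose in addition that −π + π/M ≤ arg z_i ≤ π/M for every i = M, ..., n. Define S(n) := {n−(M−2), ..., n}, S_+(n) := {i ∈ S(n) : arg z_i ≥ 0}, and S_−(n) := {i ∈ S(n) : arg z_i < 0}. Then |Σ_{i ∈ S_+(n)} arg z_i| ≤ π(M−1)/M and |Σ_{i ∈ S_−(n)} arg z_i| ≤ π(M−1)/M. -/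
/-!
The positive arguments in a window of `M - 1` consecutive indices are each at most `π/M`, so
their sum is at most `π(M-1)/M`. The negative ones are handled by induction on the window. If
`arg z_{i+1} < 0`, the argument sum `S₊ + S₋` over the previous window lies in `(-π, π)`, so
`(z_{i-(M-2)} ⋯ z_i)⁻¹` has argument `-(S₊ + S₋)`; adding `a_{i+1} w`, whose argument lies in
`[0, π/M]`, turns it counterclockwise while it stays in the lower half-plane, so
`arg z_{i+1} ≥ -(S₊ + S₋)`. The new negative sum is then at least `arg z_{i+1} + S₋ ≥ -S₊`.
-/

open Complex Finset
open scoped Real ComplexConjugate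
theorem Complex.im_mul_conj_eq (x y : ℂ) :
    (y * conj x).im = ‖x‖ * ‖y‖ * Real.sin (arg y - arg x) := by
  rw [Real.sin_sub, mul_im, conj_re, conj_im, ← norm_mul_cos_arg x, ← norm_mul_sin_arg x,
    ← norm_mul_cos_arg y, ← norm_mul_sin_arg y]
  ring

theorem Complex.arg_le_arg_of_im_mul_conj_nonneg {x y : ℂ} (hx : x.im < 0) (hy : y.im < 0)
    (h : 0 ≤ (y * conj x).im) : arg x ≤ arg y := by
  have hx0 : x ≠ 0 := fun h => by simp [h] at hx
  have hy0 : y ≠ 0 := fun h => by simp [h] at hy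
  rw [im_mul_conj_eq] at h
  have hsin : 0 ≤ Real.sin (arg y - arg x) :=
    nonneg_of_mul_nonneg_right h (by positivity)
  by_contra! hlt
  have := Real.sin_neg_of_neg_of_neg_pi_lt (sub_neg.2 hlt)
    (by linarith [neg_pi_lt_arg y, arg_neg_iff.2 hx])
  linarith

theorem Complex.arg_le_arg_add {c u : ℂ} (hc : 0 ≤ arg c) (hcu : arg c - arg u ≤ π)
    (h : (c + u).im < 0) : arg u ≤ arg (c + u) := by
  have hu : u.im < 0 := by linarith [add_im c u, arg_nonneg_iff.1 hc]
  refine arg_le_arg_of_im_mul_conj_nonneg hu h ?_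
  have hcross : ((c + u) * conj u).im = (c * conj u).im := by
    simp [add_mul, mul_conj]
  rw [hcross, im_mul_conj_eq]
  have hsin := Real.sin_nonneg_of_nonneg_of_le_pi (by linarith [arg_neg_iff.2 hu]) hcu
  exact mul_nonneg (by positivity) hsin

theorem Complex.arg_prod_coe_angle {ι : Type*} (s : Finset ι) {z : ι → ℂ}
    (hz : ∀ j ∈ s, z j ≠ 0) : (arg (∏ j ∈ s, z j) : Real.Angle) =
      ((∑ j ∈ s, arg (z j) : ℝ) : Real.Angle) := by
  induction s using Finset.cons_induction with
  | empty => simp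
  | cons a s ha ih =>
    rw [prod_cons, sum_cons, arg_mul_coe_angle (hz a (mem_cons_self a s))
      (prod_ne_zero_iff.2 fun j hj => hz j (mem_cons_of_mem hj)),
      ih fun j hj => hz j (mem_cons_of_mem hj), Real.Angle.coe_add]

theorem Complex.arg_prod {ι : Type*} (s : Finset ι) {z : ι → ℂ} (hz : ∀ j ∈ s, z j ≠ 0)
    (h : ∑ j ∈ s, arg (z j) ∈ Set.Ioc (-π) π) : arg (∏ j ∈ s, z j) = ∑ j ∈ s, arg (z j) := by
  rw [arg_coe_angle_eq_iff_eq_toReal.1 (arg_prod_coe_angle s hz)]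
  exact Real.Angle.toReal_coe_eq_self_iff_mem_Ioc.2 h

theorem Complex.neg_sum_arg_le_arg_add_inv_prod {ι : Type*} (s : Finset ι) {z : ι → ℂ} {c : ℂ}
    (hz : ∀ j ∈ s, z j ≠ 0) (hs : |∑ j ∈ s, arg (z j)| < π) (hc : 0 ≤ arg c)
    (hcs : arg c + ∑ j ∈ s, arg (z j) ≤ π) (h : (c + (∏ j ∈ s, z j)⁻¹).im < 0) :
    -∑ j ∈ s, arg (z j) ≤ arg (c + (∏ j ∈ s, z j)⁻¹) := by
  obtain ⟨hs₁, hs₂⟩ := abs_lt.1 hs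
  have harg : arg (∏ j ∈ s, z j) = ∑ j ∈ s, arg (z j) := arg_prod s hz ⟨hs₁, hs₂.le⟩
  have harg_inv : arg (∏ j ∈ s, z j)⁻¹ = -∑ j ∈ s, arg (z j) := by
    rw [arg_inv, harg, if_neg hs₂.ne]
  rw [← harg_inv]
  exact arg_le_arg_add hc (by linarith) h

theorem Finset.sum_filter_nonneg_le_card_mul {ι : Type*} (s : Finset ι) {θ : ι → ℝ} {β : ℝ}
    (hβ : 0 ≤ β) (h : ∀ j ∈ s, θ j ≤ β) :
    ∑ j ∈ s.filter (fun j => 0 ≤ θ j), θ j ≤ #s * β :=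
  calc ∑ j ∈ s.filter (fun j => 0 ≤ θ j), θ j ≤ #(s.filter (fun j => 0 ≤ θ j)) • β :=
        sum_le_card_nsmul _ _ _ fun j hj => h j (mem_filter.1 hj).1
    _ ≤ #s * β := by
        rw [nsmul_eq_mul]
        exact mul_le_mul_of_nonneg_right (by exact_mod_cast card_filter_le _ _) hβ

theorem Finset.sum_filter_neg_Icc_succ_ge (θ : ℕ → ℝ) (k i : ℕ) :
    min (θ (i + 1)) 0 + ∑ j ∈ (Icc (i - k) i).filter (fun j => θ j < 0), θ j ≤
      ∑ j ∈ (Icc (i + 1 - k) (i + 1)).filter (fun j => θ j < 0), θ j := by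
  set g : ℕ → ℝ := fun j => if θ j < 0 then θ j else 0
  have hg : ∀ j, g j ≤ 0 := fun j => by dsimp only [g]; split_ifs <;> linarith
  have hmin : min (θ (i + 1)) 0 = g (i + 1) := by
    dsimp only [g]; split_ifs with h
    · exact min_eq_left h.le
    · exact min_eq_right (not_lt.1 h)
  have hnotin : i + 1 ∉ Icc (i - k) i := by simp
  have hsub : Icc (i + 1 - k) (i + 1) ⊆ insert (i + 1) (Icc (i - k) i) := by
    intro j; simp only [mem_insert, mem_Icc]; omega
  rw [sum_filter, sum_filter, hmin, ← sum_insert hnotin]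
  exact sum_le_sum_of_subset_of_nonpos' hsub fun j _ _ => hg j

section Window

variable {M n : ℕ} {z : ℕ → ℂ}

theorem card_Icc_sub_le (hM : 2 ≤ M) (i : ℕ) : #(Icc (i - (M - 2)) i) ≤ M - 1 := by
  rw [Nat.card_Icc]; omega

theorem sum_filter_nonneg_window_le (hM : 2 ≤ M) {θ : ℕ → ℝ} {i : ℕ}
    (h : ∀ j ∈ Icc (i - (M - 2)) i, θ j ≤ π / M) :
    ∑ j ∈ (Icc (i - (M - 2)) i).filter (fun j => 0 ≤ θ j), θ j ≤ π - π / M := by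
  have hM' : (2 : ℝ) ≤ M := by exact_mod_cast hM
  calc _ ≤ #(Icc (i - (M - 2)) i) * (π / M) :=
        sum_filter_nonneg_le_card_mul _ (by positivity) h
    _ ≤ ((M - 1 : ℕ) : ℝ) * (π / M) := by gcongr; exact card_Icc_sub_le hM i
    _ = π - π / M := by rw [Nat.cast_sub (by omega)]; field_simp; ring

theorem sum_filter_neg_window_ge (hM : 2 ≤ M) {c : ℕ → ℂ}
    (hz : ∀ j, 1 ≤ j → j ≤ n → z j ≠ 0 ∧ arg (z j) ≤ π / M)
    (hinit : ∀ j, 1 ≤ j → j ≤ M - 1 → 0 ≤ arg (z j))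
    (hc : ∀ i, M ≤ i → i ≤ n → 0 ≤ arg (c i) ∧ arg (c i) ≤ π / M)
    (hrec : ∀ i, M ≤ i → i ≤ n → z i = c i + (∏ t ∈ Icc (i - (M - 1)) (i - 1), z t)⁻¹)
    {i : ℕ} (hi : M - 1 ≤ i) (hin : i ≤ n) :
    -(π - π / M) ≤ ∑ j ∈ (Icc (i - (M - 2)) i).filter (fun j => arg (z j) < 0), arg (z j) := by
  have hM' : (1 : ℝ) < M := by exact_mod_cast hM
  have hπM : 0 < π / M := by positivity
  have hπM' : π / M < π := div_lt_self Real.pi_pos hM'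
  induction i, hi using Nat.le_induction with
  | base =>
    have hempty : (Icc (M - 1 - (M - 2)) (M - 1)).filter (fun j => arg (z j) < 0) = ∅ :=
      filter_eq_empty_iff.2 fun j hj => not_lt.2 <| hinit j (by grind) (mem_Icc.1 hj).2
    rw [hempty, sum_empty]
    linarith
  | succ i hi ih =>
    set W := Icc (i - (M - 2)) i
    have hW : ∀ j ∈ W, z j ≠ 0 ∧ arg (z j) ≤ π / M := fun j hj =>
      hz j (by grind) (by grind)
    set Sp := ∑ j ∈ W.filter (fun j => 0 ≤ arg (z j)), arg (z j)
    set Sn := ∑ j ∈ W.filter (fun j => arg (z j) < 0), arg (z j)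
    have hSp : Sp ≤ π - π / M := sum_filter_nonneg_window_le hM fun j hj => (hW j hj).2
    have hSp0 : 0 ≤ Sp := sum_nonneg fun j hj => (mem_filter.1 hj).2
    have hSn : -(π - π / M) ≤ Sn := ih (by omega)
    have hSn0 : Sn ≤ 0 := sum_nonpos fun j hj => (mem_filter.1 hj).2.le
    have hsplit : ∑ j ∈ W, arg (z j) = Sp + Sn := by
      rw [← sum_filter_add_sum_filter_not W (fun j => 0 ≤ arg (z j))]
      simp only [not_le, Sp, Sn]
    have hstep : -(π - π / M) ≤ min (arg (z (i + 1))) 0 + Sn := by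
      rcases le_or_gt 0 (arg (z (i + 1))) with hnn | hneg
      · rw [min_eq_right hnn]; linarith
      obtain ⟨hc0, hcM⟩ := hc (i + 1) (by omega) hin
      have hrec' : z (i + 1) = c (i + 1) + (∏ t ∈ W, z t)⁻¹ := by
        have hIcc : Icc (i + 1 - (M - 1)) (i + 1 - 1) = W := by congr 1; omega
        rw [hrec (i + 1) (by omega) hin, hIcc]
      have hle := neg_sum_arg_le_arg_add_inv_prod W (fun j hj => (hW j hj).1)
        (by rw [hsplit, abs_lt]; constructor <;> linarith) hc0 (by rw [hsplit]; linarith)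
        (by rw [← hrec']; exact arg_neg_iff.1 hneg)
      rw [← hrec', hsplit] at hle
      rw [min_eq_left hneg.le]
      linarith
    linarith [sum_filter_neg_Icc_succ_ge (fun j => arg (z j)) (M - 2) i]

end Window

theorem arg_window_sums_bounded_general
    (M n : ℕ) (hM : 2 ≤ M) (hMn : M ≤ n)
    (w : ℂ) (a : ℕ → ℝ) (z : ℕ → ℂ)
    (hw0 : 0 ≤ w.arg) (hwM : w.arg ≤ Real.pi / M)
    (hzinit : ∀ i, 1 ≤ i → i ≤ M - 1 →
      z i ≠ 0 ∧ 0 ≤ (z i).arg ∧ (z i).arg ≤ Real.pi / M)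
    (hapos : ∀ i, M ≤ i → i ≤ n → 0 < a i)
    (hrec : ∀ i, M ≤ i → i ≤ n →
      z i = (a i : ℂ) * w + (∏ t ∈ Finset.Icc (i - (M - 1)) (i - 1), z t)⁻¹)
    (hznz : ∀ i, M ≤ i → i ≤ n → z i ≠ 0)
    (hzarg : ∀ i, M ≤ i → i ≤ n →
      -Real.pi + Real.pi / M ≤ (z i).arg ∧ (z i).arg ≤ Real.pi / M) :
    |∑ i ∈ (Finset.Icc (n - (M - 2)) n).filter (fun i => 0 ≤ (z i).arg), (z i).arg| ≤
        Real.pi * (M - 1) / M ∧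
    |∑ i ∈ (Finset.Icc (n - (M - 2)) n).filter (fun i => (z i).arg < 0), (z i).arg| ≤
        Real.pi * (M - 1) / M := by
  have hz : ∀ j, 1 ≤ j → j ≤ n → z j ≠ 0 ∧ arg (z j) ≤ π / M := fun j hj₁ hj₂ =>
    if h : M ≤ j then ⟨hznz j h hj₂, (hzarg j h hj₂).2⟩
    else ⟨(hzinit j hj₁ (by omega)).1, (hzinit j hj₁ (by omega)).2.2⟩
  have hpos := sum_filter_nonneg_window_le hM (θ := fun j => arg (z j)) (i := n)
    fun j hj => (hz j (by grind) (mem_Icc.1 hj).2).2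
  have hneg := sum_filter_neg_window_ge hM hz (fun j hj₁ hj₂ => (hzinit j hj₁ hj₂).2.1)
    (c := fun i => (a i : ℂ) * w)
    (fun i hi₁ hi₂ => by rw [arg_real_mul w (hapos i hi₁ hi₂)]; exact ⟨hw0, hwM⟩) hrec
    (by omega) le_rfl
  have hπ : π - π / M = π * (M - 1) / M := by field_simp
  constructor
  · rw [abs_of_nonneg (sum_nonneg fun j hj => (mem_filter.1 hj).2)]; linarith
  · rw [abs_of_nonpos (sum_nonpos fun j hj => (mem_filter.1 hj).2.le)]; linarith

/-- Lemma on the recursion `z_i = a_i w + 1/(z_{i-1} ⋯ z_{i-(M-1)})`: the sums of the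
positive and of the negative arguments over the window `S(n) = {n-(M-2), ..., n}` are
bounded by `π(M-1)/M` in absolute value. -/
theorem arg_window_sums_bounded
    (M n : ℕ) (hM : 2 ≤ M) (hMn : M ≤ n)
    (w : ℂ) (a : ℕ → ℝ) (z : ℕ → ℂ)
    (hw : w ≠ 0) (hw0 : 0 ≤ w.arg) (hwM : w.arg ≤ Real.pi / M)
    (hzinit : ∀ i, 1 ≤ i → i ≤ M - 1 →
      z i ≠ 0 ∧ 0 ≤ (z i).arg ∧ (z i).arg ≤ Real.pi / M)
    (hapos : ∀ i, M ≤ i → i ≤ n → 0 < a i)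
    (hrec : ∀ i, M ≤ i → i ≤ n →
      z i = (a i : ℂ) * w + (∏ t ∈ Finset.Icc (i - (M - 1)) (i - 1), z t)⁻¹)
    (hznz : ∀ i, M ≤ i → i ≤ n → z i ≠ 0)
    (hzarg : ∀ i, M ≤ i → i ≤ n →
      -Real.pi + Real.pi / M ≤ (z i).arg ∧ (z i).arg ≤ Real.pi / M) :
    |∑ i ∈ (Finset.Icc (n - (M - 2)) n).filter (fun i => 0 ≤ (z i).arg), (z i).arg| ≤
        Real.pi * (M - 1) / M ∧
    |∑ i ∈ (Finset.Icc (n - (M - 2)) n).filter (fun i => (z i).arg < 0), (z i).arg| ≤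
        Real.pi * (M - 1) / M :=
  arg_window_sums_bounded_general M n hM hMn w a z hw0 hwM hzinit hapos hrec hznz hzarg
end

section
/- Let f(x) = a_0 x^n + ... + a_n be a real polynomial of degree n, let 2 ≤ M ≤ n, and suppose all the leading coefficients h_0, h_1, ..., h_n of the polynomials f_0, ..., f_n produced by the generalized Euclidean algorithm with step M are positive. Let z be a nonzero complex number with 0 ≤ arg z < π/M. Then f_k(z) ≠ 0 for every k = 0, 1, ..., n, and, setting w_i := f_{n−i}(z)/f_{n−i+1}(z) for i = 1, ..., n, S(n) := {n−(M−2), ..., n}, S_+(n) := {i ∈ S(n) : arg w_i ≥ 0}, and S_−(n) := {i ∈ S(n) : arg w_i < 0}, one has |Σ_{i ∈ S_+(n)} arg w_i| ≤ π(M−1)/M and |Σ_{i ∈ S_−(n)} arg w_i| ≤ π(M−1)/M. -/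
open Polynomial

/-- The arithmetic part `f_j` of the polynomial with coefficients `a_0,...,a_n`:
`f_j(x) = Σ_{0 ≤ l ≤ n, l ≡ j (mod M)} a_l x^(n-l)`. -/
noncomputable def geaInit (a : ℕ → ℝ) (n M j : ℕ) : Polynomial ℝ :=
  ∑ l ∈ Finset.range (n + 1), if l % M = j then C (a l) * X ^ (n - l) else 0

/-- The polynomials `f_0, f_1, ..., f_n` of the generalized Euclidean algorithm with step `M`:
`f_i = d_i f_{i+1} + f_{i+M}` where `d_i = f_i / f_{i+1}` and `f_{i+M} = f_i % f_{i+1}`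
(Euclidean division of polynomials). -/
noncomputable def gea (a : ℕ → ℝ) (n M : ℕ) : ℕ → Polynomial ℝ
  | i =>
    if _h : i < M then geaInit a n M i
    else if _h2 : 2 ≤ M then
      gea a n M (i - M) % gea a n M (i - M + 1)
    else 0
  termination_by i => i
  decreasing_by all_goals omega

/-!
Every `f_i` only involves monomials `x^e` with `e + i ≡ n (mod M)`, and this is preserved by
Euclidean division. Together with the positivity of the leading coefficients it forces
`deg f_i = n - i`, so that each division step reads `f_i = (h_i / h_{i+1}) x f_{i+1} + f_{i+M}`,
while `f_i = h_i x^(n-i)` for `i > n - M`.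

At `z`, with `θ = arg z` and `F_j = f_{n-j}(z)`, let `ψ_j` be the running sum of the principal
arguments of the ratios `F_j / F_{j-1}`. By induction on `j`, `ψ_j` is an argument of `F_j` and
`-(k + M - j) θ ≤ ψ_j - ψ_k ≤ (j - k) θ` for `k ≤ j ≤ k + M`: the vectors `c z F_{j-1}` and
`F_{j-M}` make an angle in `[0, Mθ] ⊆ [0, π)`, so the argument of their sum `F_j` lies between
theirs. Hence `arg w_i ≤ θ` for all `i`, and the sum of all `arg w_i` over the window is at least
`-θ`; this bounds both the positive and the negative part of that sum by `(M - 1) θ`.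
-/

namespace Polynomial

variable {R : Type*} {M : ℕ} {c d : ZMod M}

def SupportModEq [Semiring R] (M : ℕ) (c : ZMod M) (p : R[X]) : Prop :=
  ∀ e, p.coeff e ≠ 0 → (e : ZMod M) = c

section Semiring

variable [Semiring R] {p q : R[X]}

theorem supportModEq_C_mul_X_pow (a : R) (k : ℕ) : SupportModEq M k (C a * X ^ k) := by
  intro e he
  rw [coeff_C_mul_X_pow] at he
  rw [(ite_ne_right_iff.mp he).1]

theorem SupportModEq.mul_C (hp : SupportModEq M c p) (a : R) : SupportModEq M c (p * C a) :=
  fun e he => hp e (left_ne_zero_of_mul (by rwa [coeff_mul_C] at he))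

theorem SupportModEq.mul (hp : SupportModEq M c p) (hq : SupportModEq M d q) :
    SupportModEq M (c + d) (p * q) := by
  intro e he
  rw [coeff_mul] at he
  obtain ⟨⟨k, l⟩, hkl, hne⟩ := Finset.exists_ne_zero_of_sum_ne_zero he
  rw [← Finset.HasAntidiagonal.mem_antidiagonal.mp hkl, Nat.cast_add,
    hp k (left_ne_zero_of_mul hne), hq l (right_ne_zero_of_mul hne)]

theorem SupportModEq.natDegree_eq (hp : SupportModEq M c p) (hp0 : p ≠ 0) :
    (p.natDegree : ZMod M) = c :=
  hp _ (leadingCoeff_ne_zero.mpr hp0)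

theorem SupportModEq.add_modEq {n i e : ℕ} (hp : SupportModEq M ((n : ZMod M) - i) p)
    (he : p.coeff e ≠ 0) : e + i ≡ n [MOD M] :=
  (ZMod.natCast_eq_natCast_iff _ _ _).mp (by push_cast; rw [hp e he, sub_add_cancel])

end Semiring

theorem SupportModEq.sub [Ring R] {p q : R[X]} (hp : SupportModEq M c p)
    (hq : SupportModEq M c q) : SupportModEq M c (p - q) := by
  intro e he
  rw [coeff_sub] at he
  by_cases hpe : p.coeff e = 0
  · exact hq e fun hqe => he (by rw [hpe, hqe, sub_zero])
  · exact hp e hpe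

theorem SupportModEq.modByMonic [CommRing R] {p q : R[X]} (hp : SupportModEq M c p)
    (hq : SupportModEq M d q) (hmonic : q.Monic) : SupportModEq M c (p %ₘ q) := by
  induction p using degree_lt_wf.induction with
  | _ p ih =>
  by_cases h : q.degree ≤ p.degree ∧ p ≠ 0
  · have : Nontrivial R := nontrivial_of_ne _ 0 (leadingCoeff_ne_zero.mpr h.2)
    set t := C p.leadingCoeff * X ^ (p.natDegree - q.natDegree)
    have hdeg : q.natDegree ≤ p.natDegree := natDegree_le_natDegree h.1
    have hclass : SupportModEq M c (q * t) := by
      have := hq.mul (supportModEq_C_mul_X_pow (M := M) p.leadingCoeff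
        (p.natDegree - q.natDegree))
      rwa [Nat.cast_sub hdeg, ← hq.natDegree_eq hmonic.ne_zero, add_sub_cancel,
        hp.natDegree_eq h.2] at this
    have hmod : p %ₘ q = (p - q * t) %ₘ q := by
      rw [sub_modByMonic, self_mul_modByMonic hmonic, sub_zero]
    rw [hmod]
    exact ih _ (div_wf_lemma h hmonic) (hp.sub hclass)
  · rcases eq_or_ne p 0 with rfl | hp0
    · rwa [zero_modByMonic]
    · have : Nontrivial R := nontrivial_of_ne _ 0 (leadingCoeff_ne_zero.mpr hp0)
      rwa [(modByMonic_eq_self_iff hmonic).mpr (by simpa [hp0] using h)]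

theorem SupportModEq.mod {K : Type*} [Field K] {p q : K[X]} (hp : SupportModEq M c p)
    (hq : SupportModEq M d q) : SupportModEq M c (p % q) := by
  rcases eq_or_ne q 0 with rfl | hq0
  · rwa [EuclideanDomain.mod_zero]
  · exact hp.modByMonic (hq.mul_C _) (monic_mul_leadingCoeff_inv hq0)

end Polynomial

section GeneralizedEuclid

variable {a : ℕ → ℝ} {n M : ℕ}

theorem gea_of_lt {i : ℕ} (h : i < M) : gea a n M i = geaInit a n M i := by
  rw [gea]; simp [h]

theorem gea_add (hM : 2 ≤ M) (i : ℕ) :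
    gea a n M (i + M) = gea a n M i % gea a n M (i + 1) := by
  rw [gea]; simp [hM]

theorem exists_of_coeff_geaInit_ne_zero {j e : ℕ} (h : (geaInit a n M j).coeff e ≠ 0) :
    ∃ l ≤ n, l % M = j ∧ e + l = n := by
  rw [geaInit, finsetSum_coeff] at h
  obtain ⟨l, hl, hne⟩ := Finset.exists_ne_zero_of_sum_ne_zero h
  rw [Finset.mem_range] at hl
  split_ifs at hne with hlM
  · rw [coeff_C_mul_X_pow] at hne
    split_ifs at hne with he
    · exact ⟨l, by omega, hlM, by omega⟩
    · exact absurd rfl hne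
  · exact absurd (coeff_zero e) hne

theorem coeff_geaInit_zero : (geaInit a n M 0).coeff n = a 0 := by
  rw [geaInit, finsetSum_coeff, Finset.sum_eq_single 0]
  · simp
  · intro l hl hl0
    split_ifs
    · rw [coeff_C_mul_X_pow, if_neg (by rw [Finset.mem_range] at hl; omega)]
    · exact coeff_zero n
  · simp

theorem supportModEq_gea (hM : 2 ≤ M) (i : ℕ) :
    SupportModEq M ((n : ZMod M) - i) (gea a n M i) := by
  induction i using Nat.strong_induction_on with
  | _ i ih =>
  rcases lt_or_ge i M with hiM | hiM
  · intro e he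
    rw [gea_of_lt hiM] at he
    obtain ⟨l, -, hl, hel⟩ := exists_of_coeff_geaInit_ne_zero he
    rw [← hl, ZMod.natCast_mod, ← hel, Nat.cast_add, add_sub_cancel_right]
  · obtain ⟨k, rfl⟩ := Nat.exists_eq_add_of_le' hiM
    rw [gea_add hM, Nat.cast_add, ZMod.natCast_self, add_zero]
    exact (ih k (by omega)).mod (ih (k + 1) (by omega))

variable (hM : 2 ≤ M) (hne : ∀ i ≤ n, gea a n M i ≠ 0)
include hM hne

theorem natDegree_gea_add_le {i : ℕ} (hi : i ≤ n) : (gea a n M i).natDegree + i ≤ n := by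
  induction i using Nat.strong_induction_on with
  | _ i ih =>
  rcases lt_or_ge i M with hiM | hiM
  · suffices (gea a n M i).natDegree ≤ n - i by omega
    rw [natDegree_le_iff_coeff_eq_zero]
    intro N hN
    by_contra hcoeff
    rw [gea_of_lt hiM] at hcoeff
    obtain ⟨l, -, hl, hNl⟩ := exists_of_coeff_geaInit_ne_zero hcoeff
    have := hl ▸ Nat.mod_le l M
    omega
  · obtain ⟨k, rfl⟩ := Nat.exists_eq_add_of_le' hiM
    have hlt : (gea a n M (k + M)).natDegree < (gea a n M (k + 1)).natDegree := by
      have h0 := hne _ hi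
      rw [gea_add hM] at h0 ⊢
      exact natDegree_lt_natDegree h0 (degree_mod_lt _ (hne _ (by omega)))
    have hmod := (supportModEq_gea hM _).add_modEq
      (leadingCoeff_ne_zero.mpr (hne _ hi))
    have := ih (k + 1) (by omega) (by omega)
    by_contra h
    have := hmod.symm.add_le_of_lt (by omega)
    omega

theorem natDegree_gea_add (ha0 : a 0 ≠ 0) {i : ℕ} (hi : i ≤ n) :
    (gea a n M i).natDegree + i = n := by
  induction h : n - i using Nat.strong_induction_on generalizing i with
  | _ k ih =>
  have hle := natDegree_gea_add_le hM hne hi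
  rcases Nat.eq_zero_or_pos i with rfl | hi0
  · have hcoeff : (gea a n M 0).coeff n ≠ 0 := by
      rwa [gea_of_lt (by omega), coeff_geaInit_zero]
    have := le_natDegree_of_ne_zero hcoeff
    omega
  · suffices n < (gea a n M i).natDegree + i + M by
      have hmod := (supportModEq_gea hM i).add_modEq
        (leadingCoeff_ne_zero.mpr (hne i hi))
      by_contra hlt
      have := hmod.add_le_of_lt (by omega)
      omega
    -- otherwise `deg f_{j+1} < n - j - M = deg f_{j+M}`, although `f_{j+M} = f_j % f_{j+1}`
    by_contra! hsmall
    obtain ⟨j, rfl⟩ : ∃ j, i = j + 1 := ⟨i - 1, by omega⟩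
    have hjM : (gea a n M (j + M)).natDegree + (j + M) = n :=
      ih (n - (j + M)) (by omega) (by omega) rfl
    have h0 := hne _ (by omega : j + M ≤ n)
    rw [gea_add hM] at h0 hjM
    have := natDegree_lt_natDegree h0 (degree_mod_lt _ (hne _ hi))
    omega

theorem gea_eq_C_mul_X_pow (ha0 : a 0 ≠ 0) {i : ℕ} (hi : i ≤ n) (hin : n < i + M) :
    gea a n M i = C (gea a n M i).leadingCoeff * X ^ (n - i) := by
  have hdeg := natDegree_gea_add hM hne ha0 hi
  ext e
  rw [coeff_C_mul_X_pow]
  split_ifs with he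
  · rw [he, ← coeff_natDegree]; congr 1; omega
  · by_contra hcoeff
    have hmod := (supportModEq_gea hM i).add_modEq hcoeff
    have := le_natDegree_of_ne_zero hcoeff
    have := hmod.add_le_of_lt (by omega)
    omega

theorem gea_eq_C_mul_X_mul_add (ha0 : a 0 ≠ 0) {i : ℕ} (hi : i + M ≤ n) :
    gea a n M i = C ((gea a n M i).leadingCoeff / (gea a n M (i + 1)).leadingCoeff) * X *
      gea a n M (i + 1) + gea a n M (i + M) := by
  set f := gea a n M i
  set g := gea a n M (i + 1)
  have hf : f ≠ 0 := hne i (by omega)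
  have hg : g ≠ 0 := hne (i + 1) (by omega)
  have hfdeg : f.natDegree + i = n := natDegree_gea_add hM hne ha0 (by omega)
  have hgdeg : g.natDegree + (i + 1) = n := natDegree_gea_add hM hne ha0 (by omega)
  set u := C (f.leadingCoeff / g.leadingCoeff) * X * g
  have hc : f.leadingCoeff / g.leadingCoeff ≠ 0 :=
    div_ne_zero (leadingCoeff_ne_zero.mpr hf) (leadingCoeff_ne_zero.mpr hg)
  have hu_lc : u.leadingCoeff = f.leadingCoeff := by
    simp only [u, leadingCoeff_mul, leadingCoeff_C, leadingCoeff_X, mul_one]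
    exact div_mul_cancel₀ _ (leadingCoeff_ne_zero.mpr hg)
  have hu_deg : u.degree = f.degree := by
    rw [degree_mul, degree_mul, degree_C hc, degree_X, degree_eq_natDegree hg,
      degree_eq_natDegree hf, zero_add]
    norm_cast
    omega
  have hu_class : SupportModEq M ((n : ZMod M) - i) u := by
    have := ((supportModEq_C_mul_X_pow (M := M) (f.leadingCoeff / g.leadingCoeff) 1).mul
      (supportModEq_gea (a := a) (n := n) hM (i + 1)))
    rw [pow_one] at this
    convert this using 1
    push_cast
    ring
  -- the leading terms of `f` and `u` cancel, and the congruence class of the exponents of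
  -- `f - u` then lowers its degree by at least `M ≥ 2`
  have hr_lt : (f - u).degree < g.degree := by
    rcases eq_or_ne (f - u) 0 with h0 | h0
    · rw [h0, degree_zero]
      exact bot_lt_iff_ne_bot.mpr (degree_eq_bot.not.mpr hg)
    have hlt := natDegree_lt_natDegree h0 (degree_sub_lt_left hu_deg.symm hf hu_lc.symm)
    have hmod : (f - u).natDegree + i ≡ n [MOD M] :=
      ((supportModEq_gea hM i).sub hu_class).add_modEq (leadingCoeff_ne_zero.mpr h0)
    have := hmod.add_le_of_lt (by omega)
    exact degree_lt_degree (by omega)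
  have hrem : gea a n M (i + M) = f - u := by
    rw [gea_add hM, ← (mod_eq_self_iff hg).mpr hr_lt, sub_mod,
      EuclideanDomain.mod_eq_zero.mpr (dvd_mul_left g _), sub_zero]
  rw [hrem, add_sub_cancel]

end GeneralizedEuclid

section Evaluation

variable {a : ℕ → ℝ} {n M : ℕ}

theorem exists_aeval_gea_sub_eq_mul_pow (hM : 2 ≤ M) (hMn : M ≤ n) (ha0 : a 0 ≠ 0)
    (hpos : ∀ i ≤ n, 0 < (gea a n M i).leadingCoeff) (z : ℂ) {j : ℕ} (hj : j < M) :
    ∃ h : ℝ, 0 < h ∧ aeval z (gea a n M (n - j)) = h * z ^ j := by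
  have hne : ∀ i ≤ n, gea a n M i ≠ 0 := fun i hi => leadingCoeff_ne_zero.mp (hpos i hi).ne'
  refine ⟨_, hpos (n - j) (by omega), ?_⟩
  rw [gea_eq_C_mul_X_pow hM hne ha0 (by omega) (by omega), Nat.sub_sub_self (by omega)]
  simp

theorem exists_aeval_gea_sub_eq_mul_add (hM : 2 ≤ M) (ha0 : a 0 ≠ 0)
    (hpos : ∀ i ≤ n, 0 < (gea a n M i).leadingCoeff) (z : ℂ) {j : ℕ} (hMj : M ≤ j)
    (hj : j ≤ n) : ∃ c : ℝ, 0 < c ∧ aeval z (gea a n M (n - j)) =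
      c * z * aeval z (gea a n M (n - (j - 1))) + aeval z (gea a n M (n - (j - M))) := by
  have hne : ∀ i ≤ n, gea a n M i ≠ 0 := fun i hi => leadingCoeff_ne_zero.mp (hpos i hi).ne'
  have hrec := gea_eq_C_mul_X_mul_add hM hne ha0 (i := n - j) (by omega)
  rw [show n - j + 1 = n - (j - 1) by omega, show n - j + M = n - (j - M) by omega] at hrec
  refine ⟨(gea a n M (n - j)).leadingCoeff / (gea a n M (n - (j - 1))).leadingCoeff,
    div_pos (hpos _ (by omega)) (hpos _ (by omega)), ?_⟩
  conv_lhs => rw [hrec]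
  simp

end Evaluation

section ComplexArgument

open Complex

/-- `φ` is an argument of `x`, not necessarily the principal one. -/
def HasArg (x : ℂ) (φ : ℝ) : Prop :=
  ∃ r : ℝ, 0 < r ∧ x = r * exp (φ * I)

variable {x y : ℂ} {φ ψ : ℝ}

theorem hasArg_arg (hx : x ≠ 0) : HasArg x x.arg :=
  ⟨‖x‖, norm_pos_iff.mpr hx, (norm_mul_exp_arg_mul_I x).symm⟩

theorem hasArg_exp_mul_I (φ : ℝ) : HasArg (exp (φ * I)) φ :=
  ⟨1, one_pos, by rw [ofReal_one, one_mul]⟩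

theorem HasArg.ne_zero (h : HasArg x φ) : x ≠ 0 := by
  obtain ⟨r, hr, rfl⟩ := h
  exact mul_ne_zero (ofReal_ne_zero.mpr hr.ne') (exp_ne_zero _)

theorem HasArg.arg_eq (h : HasArg x φ) (h₁ : -Real.pi < φ) (h₂ : φ ≤ Real.pi) : x.arg = φ := by
  obtain ⟨r, hr, rfl⟩ := h
  rw [arg_real_mul _ hr, exp_mul_I]
  exact arg_cos_add_sin_mul_I ⟨h₁, h₂⟩

theorem HasArg.mul (hx : HasArg x φ) (hy : HasArg y ψ) : HasArg (x * y) (φ + ψ) := by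
  obtain ⟨r, hr, rfl⟩ := hx
  obtain ⟨s, hs, rfl⟩ := hy
  refine ⟨r * s, mul_pos hr hs, ?_⟩
  push_cast
  rw [add_mul, exp_add]
  ring

theorem HasArg.div (hx : HasArg x φ) (hy : HasArg y ψ) : HasArg (x / y) (φ - ψ) := by
  obtain ⟨r, hr, rfl⟩ := hx
  obtain ⟨s, hs, rfl⟩ := hy
  refine ⟨r / s, div_pos hr hs, ?_⟩
  push_cast
  rw [sub_mul, exp_sub]
  field_simp

theorem HasArg.pow (hx : HasArg x φ) (k : ℕ) : HasArg (x ^ k) (k * φ) := by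
  induction k with
  | zero => simpa using hasArg_exp_mul_I 0
  | succ k ih => simpa [pow_succ, add_mul] using ih.mul hx

theorem HasArg.ofReal_mul (hx : HasArg x φ) {c : ℝ} (hc : 0 < c) : HasArg (c * x) φ := by
  obtain ⟨r, hr, rfl⟩ := hx
  exact ⟨c * r, mul_pos hc hr, by push_cast; ring⟩

theorem HasArg.add (hx : HasArg x φ) (hy : HasArg y ψ) (hle : ψ ≤ φ) (hlt : φ - ψ < Real.pi) :
    ∃ χ, ψ ≤ χ ∧ χ ≤ φ ∧ HasArg (x + y) χ := by
  obtain ⟨r, hr, rfl⟩ := hx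
  obtain ⟨s, hs, rfl⟩ := hy
  rcases hle.eq_or_lt with rfl | hψφ
  · exact ⟨ψ, le_rfl, le_rfl, r + s, by positivity, by push_cast; ring⟩
  set d := φ - ψ
  have hsin : 0 < Real.sin d := Real.sin_pos_of_pos_of_lt_pi (sub_pos.mpr hψφ) hlt
  have hexp : exp ((-d : ℝ) * I) * exp (d * I) = 1 := by
    rw [← exp_add, ofReal_neg, neg_mul, neg_add_cancel, exp_zero]
  -- `x + y = w e^{iψ}`, where `w` lies in the upper half-plane and `w e^{-id}` in the lower one
  set w : ℂ := s + r * exp (d * I)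
  set t : ℂ := s * exp ((-d : ℝ) * I) + r
  have hsum : r * exp (φ * I) + s * exp (ψ * I) = w * exp (ψ * I) := by
    rw [show φ = d + ψ by ring, ofReal_add, add_mul, exp_add]
    ring
  have hwt : w = t * exp (d * I) := by
    simp only [w, t]
    linear_combination (-(s : ℂ)) * hexp
  have hw_im : 0 < w.im := by
    rw [add_im, ofReal_im, im_ofReal_mul, exp_ofReal_mul_I_im, zero_add]
    exact mul_pos hr hsin
  have ht_im : t.im < 0 := by
    rw [add_im, im_ofReal_mul, exp_ofReal_mul_I_im, ofReal_im, Real.sin_neg]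
    linarith [mul_pos hs hsin]
  have hw : w ≠ 0 := fun h => by simp [h] at hw_im
  have ht : t ≠ 0 := fun h => by simp [h] at ht_im
  have hw_arg : w.arg = t.arg + d := by
    have : HasArg w (t.arg + d) := by
      rw [hwt]
      exact (hasArg_arg ht).mul (hasArg_exp_mul_I d)
    exact this.arg_eq (by linarith [neg_pi_lt_arg t]) (by linarith [arg_neg_iff.mpr ht_im])
  refine ⟨w.arg + ψ, ?_, ?_, ?_⟩
  · linarith [arg_nonneg_iff.mpr hw_im.le]
  · linarith [arg_neg_iff.mpr ht_im]
  · rw [hsum]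
    exact (hasArg_arg hw).mul (hasArg_exp_mul_I ψ)

theorem HasArg.mul_add (hx : HasArg x φ) (hy : HasArg y ψ) {c : ℝ} (hc : 0 < c) {z : ℂ}
    (hz : z ≠ 0) (hle : ψ ≤ φ + z.arg) (hlt : φ + z.arg - ψ < Real.pi)
    (hgt : -Real.pi < ψ - φ) :
    HasArg (c * z * x + y) (φ + ((c * z * x + y) / x).arg) ∧
      ψ ≤ φ + ((c * z * x + y) / x).arg ∧ ((c * z * x + y) / x).arg ≤ z.arg := by
  obtain ⟨χ, hψχ, hχ, hsum⟩ := (((hasArg_arg hz).ofReal_mul hc).mul hx).add hy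
    (by linarith) (by linarith)
  have harg : ((c * z * x + y) / x).arg = χ - φ :=
    (hsum.div hx).arg_eq (by linarith) (by linarith [arg_le_pi z])
  rw [harg, add_sub_cancel]
  exact ⟨hsum, hψχ, by linarith⟩

end ComplexArgument

theorem abs_sum_filter_nonneg_le {ι : Type*} (s : Finset ι) (x : ι → ℝ) {θ : ℝ} (hθ : 0 ≤ θ)
    (hx : ∀ i ∈ s, x i ≤ θ) : |∑ i ∈ s.filter (fun i => 0 ≤ x i), x i| ≤ s.card * θ := by
  rw [abs_of_nonneg (Finset.sum_nonneg fun i hi => (Finset.mem_filter.mp hi).2)]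
  calc ∑ i ∈ s.filter (fun i => 0 ≤ x i), x i ≤ (s.filter (fun i => 0 ≤ x i)).card * θ := by
        simpa using Finset.sum_le_card_nsmul _ _ _ fun i hi => hx i (Finset.mem_filter.mp hi).1
    _ ≤ s.card * θ := by gcongr; exact Finset.filter_subset _ s

theorem abs_sum_filter_neg_le {ι : Type*} (s : Finset ι) (x : ι → ℝ) {θ : ℝ} (hθ : 0 ≤ θ)
    (hx : ∀ i ∈ s, x i ≤ θ) (hsum : -θ ≤ ∑ i ∈ s, x i) :
    |∑ i ∈ s.filter (fun i => x i < 0), x i| ≤ s.card * θ := by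
  rcases (s.filter (fun i => x i < 0)).eq_empty_or_nonempty with hN | hN
  · rw [hN, Finset.sum_empty, abs_zero]
    positivity
  rw [abs_of_nonpos (Finset.sum_nonpos fun i hi => (Finset.mem_filter.mp hi).2.le)]
  have hsplit := Finset.sum_filter_add_sum_filter_not s (fun i => x i < 0) x
  have hP : ∑ i ∈ s.filter (fun i => ¬ x i < 0), x i ≤
      (s.filter (fun i => ¬ x i < 0)).card * θ := by
    simpa using Finset.sum_le_card_nsmul _ _ _ fun i hi => hx i (Finset.mem_filter.mp hi).1
  have hcard : ((s.filter (fun i => ¬ x i < 0)).card : ℝ) + 1 ≤ s.card := by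
    have := Finset.card_filter_add_card_filter_not (s := s) (fun i => x i < 0)
    have := hN.card_pos
    exact_mod_cast (by omega)
  nlinarith

section ArgLift

open Complex

variable {F : ℕ → ℂ} {z : ℂ} {M n : ℕ}

noncomputable def argLift (F : ℕ → ℂ) (j : ℕ) : ℝ :=
  ∑ i ∈ Finset.Ioc 0 j, (F i / F (i - 1)).arg

theorem argLift_succ (F : ℕ → ℂ) (j : ℕ) :
    argLift F (j + 1) = argLift F j + (F (j + 1) / F j).arg := by
  rw [argLift, argLift, Finset.sum_Ioc_succ_top (Nat.zero_le j), Nat.add_sub_cancel]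

theorem argLift_sub_argLift (F : ℕ → ℂ) {k j : ℕ} (h : k ≤ j) :
    argLift F j - argLift F k = ∑ i ∈ Finset.Ioc k j, (F i / F (i - 1)).arg := by
  rw [argLift, argLift, ← Finset.sum_Ioc_consecutive _ (Nat.zero_le k) h, add_sub_cancel_left]

theorem argLift_of_lt (hz : z ≠ 0) (hbase : ∀ j < M, ∃ h : ℝ, 0 < h ∧ F j = h * z ^ j)
    {j : ℕ} (hj : j < M) : argLift F j = j * z.arg := by
  induction j with
  | zero => simp [argLift]
  | succ j ih =>
    obtain ⟨h, hh, hF⟩ := hbase (j + 1) hj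
    obtain ⟨h', hh', hF'⟩ := hbase j (by omega)
    have hh'0 : (h' : ℂ) ≠ 0 := ofReal_ne_zero.mpr hh'.ne'
    have hratio : F (j + 1) / F j = ((h / h' : ℝ) : ℂ) * z := by
      rw [hF, hF']
      push_cast
      field_simp
      ring
    rw [argLift_succ, ih (by omega), hratio, arg_real_mul _ (div_pos hh hh')]
    push_cast
    ring

variable (hM : 0 < M) (hz : z ≠ 0) (harg0 : 0 ≤ z.arg) (hargM : M * z.arg < Real.pi)
  (hbase : ∀ j < M, ∃ h : ℝ, 0 < h ∧ F j = h * z ^ j)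
  (hstep : ∀ j, M ≤ j → j ≤ n → ∃ c : ℝ, 0 < c ∧ F j = c * z * F (j - 1) + F (j - M))
include hM hz harg0 hargM hbase hstep

theorem hasArg_argLift : ∀ j ≤ n, HasArg (F j) (argLift F j) ∧ ∀ k ≤ j, j ≤ k + M →
      -((k + M - j : ℝ) * z.arg) ≤ argLift F j - argLift F k ∧
        argLift F j - argLift F k ≤ (j - k : ℝ) * z.arg := by
  intro j
  induction j using Nat.strong_induction_on with
  | _ j ih =>
  intro hj
  rcases lt_or_ge j M with hjM | hjM
  · obtain ⟨h, hh, hF⟩ := hbase j hjM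
    refine ⟨?_, fun k hk _ => ?_⟩
    · rw [hF, argLift_of_lt hz hbase hjM]
      exact ((hasArg_arg hz).pow j).ofReal_mul hh
    · rw [argLift_of_lt hz hbase hjM, argLift_of_lt hz hbase (by omega)]
      have : (k : ℝ) ≤ j := by exact_mod_cast hk
      have : (j : ℝ) < M := by exact_mod_cast hjM
      constructor <;> nlinarith
  · obtain ⟨c, hc, hF⟩ := hstep j hjM hj
    obtain ⟨hx, hgap⟩ := ih (j - 1) (by omega) (by omega)
    have hy := (ih (j - M) (by omega) (by omega)).1
    have hcast1 : ((j - 1 : ℕ) : ℝ) = j - 1 := by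
      rw [Nat.cast_sub (by omega : 1 ≤ j), Nat.cast_one]
    have hcast2 : ((j - M : ℕ) : ℝ) = j - M := Nat.cast_sub hjM
    have hgapM := hgap (j - M) (by omega) (by omega)
    rw [hcast1, hcast2] at hgapM
    have hψ : argLift F j = argLift F (j - 1) + (F j / F (j - 1)).arg := by
      simpa [Nat.sub_add_cancel (by omega : 1 ≤ j)] using argLift_succ F (j - 1)
    obtain ⟨hχ, hχ₂, hχ₁⟩ := hF ▸ hx.mul_add hy hc hz (by nlinarith) (by nlinarith) (by nlinarith)
    rw [← hψ] at hχ hχ₂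
    refine ⟨hχ, fun k hk hjk => ?_⟩
    rcases eq_or_lt_of_le hk with rfl | hkj
    · rw [sub_self, sub_self, zero_mul]
      constructor <;> nlinarith
    have hk₁ := (hgap k (by omega) (by omega)).2
    have hk₂ := ((ih k hkj (by omega)).2 (j - M) (by omega) (by omega)).2
    rw [hcast1] at hk₁
    rw [hcast2] at hk₂
    constructor <;> linarith

theorem arg_ratio_le_and_neg_le_sum (hMn : M ≤ n + 1) :
    (∀ i ∈ Finset.Ioc 0 n, (F i / F (i - 1)).arg ≤ z.arg) ∧
      -z.arg ≤ ∑ i ∈ Finset.Ioc (n + 1 - M) n, (F i / F (i - 1)).arg := by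
  have hF := hasArg_argLift hM hz harg0 hargM hbase hstep
  refine ⟨fun i hi => ?_, ?_⟩
  · obtain ⟨hi0, hin⟩ := Finset.mem_Ioc.mp hi
    obtain ⟨k, rfl⟩ : ∃ k, i = k + 1 := ⟨i - 1, by omega⟩
    have := ((hF (k + 1) hin).2 k (by omega) (by omega)).2
    rw [argLift_succ] at this
    push_cast at this
    rw [Nat.add_sub_cancel]
    linarith
  · have := ((hF n le_rfl).2 (n + 1 - M) (by omega) (by omega)).1
    rw [argLift_sub_argLift F (by omega), Nat.cast_sub hMn] at this
    push_cast at this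
    linarith

theorem abs_sum_filter_arg_le (hMn : M ≤ n + 1) {w : ℕ → ℂ}
    (hw : ∀ i ∈ Finset.Ioc (n + 1 - M) n, w i = F i / F (i - 1)) :
    |∑ i ∈ (Finset.Ioc (n + 1 - M) n).filter (fun i => 0 ≤ (w i).arg), (w i).arg| ≤
        Real.pi * (M - 1) / M ∧
      |∑ i ∈ (Finset.Ioc (n + 1 - M) n).filter (fun i => (w i).arg < 0), (w i).arg| ≤
        Real.pi * (M - 1) / M := by
  obtain ⟨hle, hsum⟩ := arg_ratio_le_and_neg_le_sum hM hz harg0 hargM hbase hstep hMn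
  have hwle : ∀ i ∈ Finset.Ioc (n + 1 - M) n, (w i).arg ≤ z.arg := fun i hi =>
    hw i hi ▸ hle i (Finset.Ioc_subset_Ioc_left (Nat.zero_le _) hi)
  have hcard : ((Finset.Ioc (n + 1 - M) n).card : ℝ) * z.arg ≤ Real.pi * (M - 1) / M := by
    have hM1 : (1 : ℝ) ≤ M := by exact_mod_cast hM
    rw [Nat.card_Ioc, show n - (n + 1 - M) = M - 1 by omega, Nat.cast_sub hM, Nat.cast_one]
    calc ((M : ℝ) - 1) * z.arg ≤ (M - 1) * (Real.pi / M) :=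
          mul_le_mul_of_nonneg_left ((le_div_iff₀' (by linarith)).mpr hargM.le)
            (sub_nonneg.mpr hM1)
      _ = Real.pi * (M - 1) / M := by ring
  refine ⟨(abs_sum_filter_nonneg_le _ _ harg0 hwle).trans hcard,
    (abs_sum_filter_neg_le _ _ harg0 hwle ?_).trans hcard⟩
  rwa [Finset.sum_congr rfl fun i hi => congrArg Complex.arg (hw i hi)]

end ArgLift

/-- If all leading coefficients `h_0, ..., h_n` in the generalized Euclidean algorithm with
step `M` are positive and `0 ≤ arg z < π/M`, then no `f_k` vanishes at `z` and the sums of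
positive and negative arguments of `w_i = f_{n-i}(z)/f_{n-i+1}(z)` over the window
`S(n) = {n-(M-2), ..., n}` are bounded by `π(M-1)/M` in absolute value. -/
theorem ratio_arg_window_sums_bounded
    (n M : ℕ) (a : ℕ → ℝ) (ha0 : a 0 ≠ 0) (hM : 2 ≤ M) (hMn : M ≤ n)
    (hpos : ∀ i ≤ n, 0 < (gea a n M i).leadingCoeff)
    (z : ℂ) (hz : z ≠ 0) (harg0 : 0 ≤ z.arg) (hargM : z.arg < Real.pi / M)
    (w : ℕ → ℂ)
    (hw : ∀ i : ℕ, w i =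
      Polynomial.aeval z (gea a n M (n - i)) / Polynomial.aeval z (gea a n M (n - i + 1))) :
    (∀ k ≤ n, Polynomial.aeval z (gea a n M k) ≠ 0) ∧
    |∑ i ∈ (Finset.Icc (n - (M - 2)) n).filter (fun i => 0 ≤ (w i).arg), (w i).arg| ≤
        Real.pi * (M - 1) / M ∧
    |∑ i ∈ (Finset.Icc (n - (M - 2)) n).filter (fun i => (w i).arg < 0), (w i).arg| ≤
        Real.pi * (M - 1) / M := by
  set F : ℕ → ℂ := fun j => aeval z (gea a n M (n - j))
  have hargM' : M * z.arg < Real.pi := by rwa [lt_div_iff₀' (by positivity)] at hargM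
  have hbase : ∀ j < M, ∃ h : ℝ, 0 < h ∧ F j = h * z ^ j := fun j hj =>
    exists_aeval_gea_sub_eq_mul_pow hM hMn ha0 hpos z hj
  have hstep : ∀ j, M ≤ j → j ≤ n → ∃ c : ℝ, 0 < c ∧ F j = c * z * F (j - 1) + F (j - M) :=
    fun j hMj hj => exists_aeval_gea_sub_eq_mul_add hM ha0 hpos z hMj hj
  refine ⟨fun k hk => ?_, ?_⟩
  · have := (hasArg_argLift (by omega) hz harg0 hargM' hbase hstep (n - k) (by omega)).1.ne_zero
    rwa [show F (n - k) = aeval z (gea a n M k) by simp only [F, Nat.sub_sub_self hk]] at this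
  · rw [show Finset.Icc (n - (M - 2)) n = Finset.Ioc (n + 1 - M) n by
      ext i; simp only [Finset.mem_Icc, Finset.mem_Ioc]; omega]
    refine abs_sum_filter_arg_le (by omega) hz harg0 hargM' hbase hstep (by omega) fun i hi => ?_
    rw [hw, show n - i + 1 = n - (i - 1) by rw [Finset.mem_Ioc] at hi; omega]
end

section
/- Let M ≥ 2 be an integer and let y_1, ..., y_{M−1} be nonzero complex numbers with −π + π/M ≤ arg y_i ≤ π/M for each i. For 1 ≤ k ≤ M−1, set T_+(k) := {1 ≤ i ≤ k : arg y_i ≥ 0} and T_−(k) := {1 ≤ i ≤ k : arg y_i < 0}, and suppose that for every k = 1, ..., M−1 one has |Σ_{i ∈ T_+(k)} arg y_i| ≤ π(M−1)/M and |Σ_{i ∈ T_−(k)} arg y_i| ≤ π(M−1)/M. Define u_1 := y_1 and u_{k+1} := y_{k+1}(u_k + 1) for k = 1, ..., M−2. Then for every k = 1, ..., M−1 (with the convention arg 0 := 0): if arg u_k ≥ 0, then arg u_k ≤ Σ_{i ∈ T_+(k)} arg y_i; if arg u_k < 0, then −arg u_k ≤ −Σ_{i ∈ T_−(k)} arg y_i;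 in particular |arg u_k| ≤ max( |Σ_{i ∈ T_+(k)} arg y_i|, |Σ_{i ∈ T_−(k)} arg y_i| ). -/
/-!
Adding a nonnegative real number to `z` moves it towards the positive real axis: this keeps the
sign of `arg z` and does not increase `|arg z|`. Multiplying by `y` then adds `arg y`, as long as
the sum stays in `(-π, π]`. So by induction on `k` the argument of `u_k` stays between the sum
`N_k` of the negative arguments and the sum `P_k` of the nonnegative arguments of `y_1, …, y_k`,
and the hypothesis `|N_k|, |P_k| ≤ π (M - 1) / M < π` rules out any wrap-around.
-/

open Complex Real Set

lemma mul_sqrt_sq_add_le_mul_sqrt_sq_add {c s t : ℝ} (hc : 0 ≤ c) (hs : 0 ≤ s) (hst : s ≤ t) :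
    s * √(t ^ 2 + c) ≤ t * √(s ^ 2 + c) := by
  refine (pow_le_pow_iff_left₀ (mul_nonneg hs (Real.sqrt_nonneg _))
    (mul_nonneg (hs.trans hst) (Real.sqrt_nonneg _)) two_ne_zero).1 ?_
  rw [mul_pow, mul_pow, Real.sq_sqrt (by positivity), Real.sq_sqrt (by positivity)]
  nlinarith [mul_le_mul_of_nonneg_right (pow_le_pow_left₀ hs hst 2) hc]

lemma monotone_div_sqrt_sq_add {c : ℝ} (hc : 0 < c) : Monotone fun x : ℝ => x / √(x ^ 2 + c) := by
  intro s t hst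
  dsimp only
  rw [div_le_div_iff₀ (by positivity) (by positivity)]
  rcases le_or_gt 0 s with hs | hs
  · exact mul_sqrt_sq_add_le_mul_sqrt_sq_add hc.le hs hst
  rcases le_or_gt t 0 with ht | ht
  · simpa using mul_sqrt_sq_add_le_mul_sqrt_sq_add hc.le (neg_nonneg.2 ht) (neg_le_neg hst)
  · nlinarith [mul_pos ht (by positivity : 0 < √(s ^ 2 + c)),
      mul_pos (neg_pos.2 hs) (by positivity : 0 < √(t ^ 2 + c))]

namespace Complex

lemma abs_arg_add_ofReal_le (z : ℂ) {t : ℝ} (ht : 0 ≤ t) : |arg (z + t)| ≤ |arg z| := by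
  rcases eq_or_ne z.im 0 with him | him
  · rcases le_or_gt 0 (z.re + t) with hre | hre
    · rw [arg_eq_zero_iff.2 ⟨by simpa using hre, by simpa using him⟩, abs_zero]
      exact abs_nonneg _
    · rw [arg_eq_pi_iff.2 ⟨by linarith, him⟩, abs_of_pos pi_pos]
      exact abs_arg_le_pi _
  · have hz : z ≠ 0 := fun h => him (by simp [h])
    have hzt : z + t ≠ 0 := fun h => him (by simpa using congrArg im h)
    rw [← Real.strictAntiOn_cos.le_iff_ge ⟨abs_nonneg _, abs_arg_le_pi _⟩
      ⟨abs_nonneg _, abs_arg_le_pi _⟩, Real.cos_abs, Real.cos_abs, cos_arg hz, cos_arg hzt,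
      norm_eq_sqrt_sq_add_sq, norm_eq_sqrt_sq_add_sq]
    simpa using monotone_div_sqrt_sq_add (pow_pos (abs_pos.2 him) 2 |>.trans_eq (sq_abs _))
      (le_add_of_nonneg_right ht : z.re ≤ z.re + t)

lemma arg_add_ofReal_mem_Icc {z : ℂ} {t a b : ℝ} (ht : 0 ≤ t) (hz : arg z ∈ Icc a b) (ha : a ≤ 0)
    (hb : 0 ≤ b) : arg (z + t) ∈ Icc a b := by
  have habs := abs_arg_add_ofReal_le z ht
  have him : (z + t).im = z.im := by simp
  constructor
  · rcases le_or_gt 0 (arg (z + t)) with h | h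
    · linarith
    · have hz' : arg z < 0 := arg_neg_iff.2 (him ▸ arg_neg_iff.1 h)
      rw [abs_of_neg h, abs_of_neg hz'] at habs
      linarith [hz.1]
  · rcases lt_or_ge (arg (z + t)) 0 with h | h
    · linarith
    · have hz' : 0 ≤ arg z := arg_nonneg_iff.2 (him ▸ arg_nonneg_iff.1 h)
      rw [abs_of_nonneg h, abs_of_nonneg hz'] at habs
      linarith [hz.2]

lemma arg_mul_mem_Icc {y w : ℂ} {a b : ℝ} (hw : arg w ∈ Icc a b) (ha : a ≤ 0) (hb : 0 ≤ b)
    (hlo : -π < a + min (arg y) 0) (hhi : b + max (arg y) 0 ≤ π) :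
    arg (y * w) ∈ Icc (a + min (arg y) 0) (b + max (arg y) 0) := by
  have hzero : (0 : ℝ) ∈ Icc (a + min (arg y) 0) (b + max (arg y) 0) :=
    ⟨by linarith [min_le_right (arg y) 0], by linarith [le_max_right (arg y) 0]⟩
  rcases eq_or_ne y 0 with rfl | hy
  · simpa using hzero
  rcases eq_or_ne w 0 with rfl | hw0
  · simpa using hzero
  have hsum : arg y + arg w ∈ Icc (a + min (arg y) 0) (b + max (arg y) 0) :=
    ⟨by linarith [min_le_left (arg y) 0, hw.1], by linarith [le_max_left (arg y) 0, hw.2]⟩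
  rw [arg_mul hy hw0 ⟨hlo.trans_le hsum.1, hsum.2.trans hhi⟩]
  exact hsum

end Complex

noncomputable def posArgSum (y : ℕ → ℂ) (k : ℕ) : ℝ :=
  ∑ i ∈ (Finset.Icc 1 k).filter (fun i => 0 ≤ (y i).arg), (y i).arg

noncomputable def negArgSum (y : ℕ → ℂ) (k : ℕ) : ℝ :=
  ∑ i ∈ (Finset.Icc 1 k).filter (fun i => (y i).arg < 0), (y i).arg

section ArgSums

variable (y : ℕ → ℂ) (k : ℕ)

@[simp]
lemma posArgSum_zero : posArgSum y 0 = 0 := by simp [posArgSum]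

@[simp]
lemma negArgSum_zero : negArgSum y 0 = 0 := by simp [negArgSum]

lemma posArgSum_succ : posArgSum y (k + 1) = posArgSum y k + max (y (k + 1)).arg 0 := by
  rw [posArgSum, posArgSum, Finset.sum_filter, Finset.sum_filter,
    Finset.sum_Icc_succ_top (Nat.le_add_left 1 k)]
  split_ifs with h
  · rw [max_eq_left h]
  · rw [max_eq_right (not_le.1 h).le]

lemma negArgSum_succ : negArgSum y (k + 1) = negArgSum y k + min (y (k + 1)).arg 0 := by
  rw [negArgSum, negArgSum, Finset.sum_filter, Finset.sum_filter,
    Finset.sum_Icc_succ_top (Nat.le_add_left 1 k)]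
  split_ifs with h
  · rw [min_eq_left h.le]
  · rw [min_eq_right (not_lt.1 h)]

lemma posArgSum_nonneg : 0 ≤ posArgSum y k :=
  Finset.sum_nonneg fun _ hi => (Finset.mem_filter.1 hi).2

lemma negArgSum_nonpos : negArgSum y k ≤ 0 :=
  Finset.sum_nonpos fun _ hi => (Finset.mem_filter.1 hi).2.le

end ArgSums

theorem arg_horner_mem_Icc (y u : ℕ → ℂ) (n : ℕ) (hu1 : u 1 = y 1)
    (hurec : ∀ k, 1 ≤ k → k < n → u (k + 1) = y (k + 1) * (u k + 1))
    (hpos : ∀ k, 1 ≤ k → k ≤ n → posArgSum y k ≤ π)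
    (hneg : ∀ k, 1 ≤ k → k ≤ n → -π < negArgSum y k) :
    ∀ k, 1 ≤ k → k ≤ n → arg (u k) ∈ Icc (negArgSum y k) (posArgSum y k) := by
  intro k hk
  induction k, hk using Nat.le_induction with
  | base =>
    intro _
    show arg (u (0 + 1)) ∈ Icc (negArgSum y (0 + 1)) (posArgSum y (0 + 1))
    rw [negArgSum_succ, posArgSum_succ, negArgSum_zero, posArgSum_zero, zero_add, zero_add,
      zero_add, hu1]
    exact ⟨min_le_left _ _, le_max_left _ _⟩
  | succ k hk ih =>
    intro hkn
    have hu : arg (u k + (1 : ℝ)) ∈ Icc (negArgSum y k) (posArgSum y k) :=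
      arg_add_ofReal_mem_Icc zero_le_one (ih (by omega)) (negArgSum_nonpos y k)
        (posArgSum_nonneg y k)
    rw [hurec k hk (by omega), negArgSum_succ, posArgSum_succ, ← ofReal_one]
    refine arg_mul_mem_Icc hu (negArgSum_nonpos y k) (posArgSum_nonneg y k) ?_ ?_
    · rw [← negArgSum_succ]; exact hneg (k + 1) (by omega) hkn
    · rw [← posArgSum_succ]; exact hpos (k + 1) (by omega) hkn

theorem horner_recursion_arg_bound_general
    (M : ℕ) (y : ℕ → ℂ)
    (hsum : ∀ k, 1 ≤ k → k ≤ M - 1 →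
      |∑ i ∈ (Finset.Icc 1 k).filter (fun i => 0 ≤ (y i).arg), (y i).arg| ≤
          Real.pi * (M - 1) / M ∧
      |∑ i ∈ (Finset.Icc 1 k).filter (fun i => (y i).arg < 0), (y i).arg| ≤
          Real.pi * (M - 1) / M)
    (u : ℕ → ℂ) (hu1 : u 1 = y 1)
    (hurec : ∀ k, 1 ≤ k → k ≤ M - 2 → u (k + 1) = y (k + 1) * (u k + 1)) :
    ∀ k, 1 ≤ k → k ≤ M - 1 →
      (0 ≤ (u k).arg →
        (u k).arg ≤ ∑ i ∈ (Finset.Icc 1 k).filter (fun i => 0 ≤ (y i).arg), (y i).arg) ∧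
      ((u k).arg < 0 →
        -(u k).arg ≤ -∑ i ∈ (Finset.Icc 1 k).filter (fun i => (y i).arg < 0), (y i).arg) ∧
      |(u k).arg| ≤
        max |∑ i ∈ (Finset.Icc 1 k).filter (fun i => 0 ≤ (y i).arg), (y i).arg|
          |∑ i ∈ (Finset.Icc 1 k).filter (fun i => (y i).arg < 0), (y i).arg| := by
  intro k hk hkM
  have hM : (1 : ℝ) ≤ M := by exact_mod_cast (by omega : 1 ≤ M)
  have hbound : π * (M - 1) / M < π := by
    rw [div_lt_iff₀ (by linarith)]
    nlinarith [pi_pos]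
  have hinv := arg_horner_mem_Icc y u (M - 1) hu1 (fun j hj hjM => hurec j hj (by omega))
    (fun j hj hjM => (abs_lt.1 ((hsum j hj hjM).1.trans_lt hbound)).2.le)
    (fun j hj hjM => (abs_lt.1 ((hsum j hj hjM).2.trans_lt hbound)).1) k hk hkM
  exact ⟨fun _ => hinv.2, fun _ => neg_le_neg hinv.1,
    (abs_le_max_abs_abs hinv.1 hinv.2).trans_eq (max_comm _ _)⟩

/-- Lemma on the Horner-type recursion `u_1 = y_1`, `u_{k+1} = y_{k+1}(u_k + 1)`: the
argument of `u_k` is controlled by the sums of positive and negative arguments of the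
`y_i`. (Here `arg 0 = 0`, as in Mathlib.) -/
theorem horner_recursion_arg_bound
    (M : ℕ) (hM : 2 ≤ M) (y : ℕ → ℂ)
    (hynz : ∀ i, 1 ≤ i → i ≤ M - 1 → y i ≠ 0)
    (hyarg : ∀ i, 1 ≤ i → i ≤ M - 1 →
      -Real.pi + Real.pi / M ≤ (y i).arg ∧ (y i).arg ≤ Real.pi / M)
    (hsum : ∀ k, 1 ≤ k → k ≤ M - 1 →
      |∑ i ∈ (Finset.Icc 1 k).filter (fun i => 0 ≤ (y i).arg), (y i).arg| ≤
          Real.pi * (M - 1) / M ∧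
      |∑ i ∈ (Finset.Icc 1 k).filter (fun i => (y i).arg < 0), (y i).arg| ≤
          Real.pi * (M - 1) / M)
    (u : ℕ → ℂ) (hu1 : u 1 = y 1)
    (hurec : ∀ k, 1 ≤ k → k ≤ M - 2 → u (k + 1) = y (k + 1) * (u k + 1)) :
    ∀ k, 1 ≤ k → k ≤ M - 1 →
      (0 ≤ (u k).arg →
        (u k).arg ≤ ∑ i ∈ (Finset.Icc 1 k).filter (fun i => 0 ≤ (y i).arg), (y i).arg) ∧
      ((u k).arg < 0 →
        -(u k).arg ≤ -∑ i ∈ (Finset.Icc 1 k).filter (fun i => (y i).arg < 0), (y i).arg) ∧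
      |(u k).arg| ≤
        max |∑ i ∈ (Finset.Icc 1 k).filter (fun i => 0 ≤ (y i).arg), (y i).arg|
          |∑ i ∈ (Finset.Icc 1 k).filter (fun i => (y i).arg < 0), (y i).arg| :=
  horner_recursion_arg_bound_general M y hsum u hu1 hurec
end

section
/- Let f(x) = a_0 x^5 + a_1 x^4 + a_2 x^3 + a_3 x^2 + a_4 x + a_5 be a real polynomial with a_0, a_1, a_2, a_5 > 0 and a_3/a_0 > a_4/a_1 > a_5/a_2. Then f does not vanish anywhere in the closed sector {z ∈ ℂ : |arg z| ≤ π/3}; in particular f has no zero z with |arg z| ≤ π/3 and none at z = 0. -/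
/-!
Group `f(z) = (a₂z³ + a₅) + z (a₁z³ + a₄) + z² (a₀z³ + a₃)`, more generally
`∑_{k<m} z^k (a_k z^m + b_k)` with `b_k / a_k` strictly increasing, and by symmetry let
`0 ≤ θ = arg z ≤ π/m`. Then `w = z^m` lies in the closed upper half-plane, and
`φ_k = arg (a_k w + b_k) ∈ [0, mθ]` decreases as `b_k / a_k` increases. The `k`-th term has
angle `kθ + φ_k`, so any two nonzero terms differ in angle by at most `(m - 1)θ < π`: all of
them lie in one open half-plane, and at least one of them is nonzero.
-/

open Complex
open scoped Real ComplexConjugate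

theorem div_sqrt_sq_add_le_div_sqrt_sq_add {s t y : ℝ} (hy : 0 ≤ y) (hst : s ≤ t)
    (hs : 0 < s ^ 2 + y) (ht : 0 < t ^ 2 + y) :
    s / √(s ^ 2 + y) ≤ t / √(t ^ 2 + y) := by
  have hu := Real.sq_sqrt hs.le
  have hv := Real.sq_sqrt ht.le
  have hu0 := Real.sqrt_pos.2 hs
  have hv0 := Real.sqrt_pos.2 ht
  rw [div_le_div_iff₀ hu0 hv0]
  rcases le_or_gt s 0 with hs0 | hs0
  · rcases le_or_gt 0 t with ht0 | ht0
    · nlinarith [mul_nonneg ht0 hu0.le, mul_nonpos_of_nonpos_of_nonneg hs0 hv0.le]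
    · rw [← neg_le_neg_iff, ← neg_mul, ← neg_mul]
      refine (pow_le_pow_iff_left₀ (by nlinarith) (by nlinarith) two_ne_zero).1 ?_
      have hts : t ^ 2 ≤ s ^ 2 := by nlinarith
      rw [mul_pow, mul_pow, hu, hv]
      nlinarith [mul_le_mul_of_nonneg_right hts hy]
  · refine (pow_le_pow_iff_left₀ (by positivity) (by nlinarith) two_ne_zero).1 ?_
    have hst2 : s ^ 2 ≤ t ^ 2 := by nlinarith
    rw [mul_pow, mul_pow, hu, hv]
    nlinarith [mul_le_mul_of_nonneg_right hst2 hy]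

namespace Complex

theorem arg_add_ofReal_le_of_le {w : ℂ} (hw : 0 ≤ w.im) {c c' : ℝ} (hc : c' ≤ c)
    (h : w + c ≠ 0) (h' : w + c' ≠ 0) : arg (w + c) ≤ arg (w + c') := by
  rw [arg_of_im_nonneg_of_ne_zero (by simpa) h, arg_of_im_nonneg_of_ne_zero (by simpa) h']
  apply Real.arccos_le_arccos
  have hpos : ∀ {x : ℂ}, x ≠ 0 → 0 < x.re ^ 2 + x.im ^ 2 := fun hx => by
    simpa [normSq_apply, ← sq] using normSq_pos.2 hx
  have key := div_sqrt_sq_add_le_div_sqrt_sq_add (sq_nonneg w.im)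
    (by linarith : w.re + c' ≤ w.re + c) (by simpa using hpos h') (by simpa using hpos h)
  simpa [norm_def, normSq_apply, ← sq] using key

theorem arg_add_ofReal_le_arg {w : ℂ} (hw : 0 ≤ w.im) {c : ℝ} (hc : 0 ≤ c) :
    arg (w + c) ≤ arg w := by
  by_cases h : w + c = 0
  · simpa [h] using arg_nonneg_iff.2 hw
  by_cases hw0 : w = 0
  · simp [hw0, arg_ofReal_of_nonneg hc]
  simpa using arg_add_ofReal_le_of_le hw hc h (by simpa using hw0)

theorem ofReal_mul_add_ofReal_eq_mul_add_div {a : ℝ} (ha : a ≠ 0) (w : ℂ) (b : ℝ) :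
    (a * w + b : ℂ) = a * (w + (b / a : ℝ)) := by
  rw [ofReal_div, mul_add, mul_div_cancel₀ _ (ofReal_ne_zero.2 ha)]

theorem arg_mul_add_le_of_div_le {w : ℂ} (hw : 0 ≤ w.im) {a b a' b' : ℝ} (ha : 0 < a)
    (ha' : 0 < a') (hba : b' / a' ≤ b / a) (h : a * w + b ≠ 0) (h' : a' * w + b' ≠ 0) :
    arg (a * w + b) ≤ arg (a' * w + b') := by
  rw [ofReal_mul_add_ofReal_eq_mul_add_div ha.ne'] at h ⊢
  rw [ofReal_mul_add_ofReal_eq_mul_add_div ha'.ne'] at h' ⊢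
  rw [arg_real_mul _ ha, arg_real_mul _ ha']
  exact arg_add_ofReal_le_of_le hw hba (right_ne_zero_of_mul h) (right_ne_zero_of_mul h')

theorem arg_mul_add_le_arg {w : ℂ} (hw : 0 ≤ w.im) {a b : ℝ} (ha : 0 < a) (hb : 0 ≤ b) :
    arg (a * w + b) ≤ arg w := by
  rw [ofReal_mul_add_ofReal_eq_mul_add_div ha.ne', arg_real_mul _ ha]
  exact arg_add_ofReal_le_arg hw (div_nonneg hb ha.le)

theorem arg_pow_of_mul_arg_mem_Ioc {z : ℂ} {n : ℕ} (h : n * arg z ∈ Set.Ioc (-π) π) :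
    arg (z ^ n) = n * arg z := by
  rw [arg_coe_angle_eq_iff_eq_toReal.1 (arg_pow_coe_angle z n), ← Real.Angle.coe_nsmul,
    nsmul_eq_mul, Real.Angle.toReal_coe_eq_self_iff_mem_Ioc.2 h]

theorem pow_mul_eq_norm_mul_exp (z x : ℂ) (k : ℕ) :
    z ^ k * x = (‖z ^ k * x‖ : ℂ) * exp ((k * arg z + arg x : ℝ) * I) := by
  conv_lhs => rw [← norm_mul_exp_arg_mul_I z, ← norm_mul_exp_arg_mul_I x]
  rw [mul_pow, ← exp_nat_mul, norm_mul, norm_pow]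
  push_cast
  rw [add_mul, exp_add]
  ring_nf

theorem re_exp_neg_mul_I_mul_ofReal_mul_exp (μ ρ ψ : ℝ) :
    (exp (-μ * I) * (ρ * exp (ψ * I))).re = ρ * Real.cos (ψ - μ) := by
  rw [mul_left_comm, ← exp_add, ← add_mul, ← ofReal_neg, ← ofReal_add, re_ofReal_mul,
    exp_ofReal_mul_I_re, neg_add_eq_sub]

end Complex

theorem Finset.sum_ofReal_mul_exp_ne_zero {ι : Type*} {s : Finset ι} {ρ ψ : ι → ℝ}
    (hρ : ∀ i ∈ s, 0 ≤ ρ i) (hpos : ∃ i ∈ s, 0 < ρ i)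
    (hψ : ∀ i ∈ s, ∀ j ∈ s, 0 < ρ i → 0 < ρ j → ψ i - ψ j < π) :
    ∑ i ∈ s, (ρ i : ℂ) * exp (ψ i * I) ≠ 0 := by
  classical
  set T := s.filter (0 < ρ ·)
  have hT : T.Nonempty := by simpa [T, Finset.filter_nonempty_iff] using hpos
  obtain ⟨i, hi, hmin⟩ := T.exists_min_image ψ hT
  obtain ⟨j, hj, hmax⟩ := T.exists_max_image ψ hT
  simp only [T, Finset.mem_filter] at hi hj hmin hmax
  have hspread := hψ j hj.1 i hi.1 hj.2 hi.2
  -- after rotating by the mid-angle, every nonzero term has positive real part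
  suffices 0 < (exp (-((ψ i + ψ j) / 2 : ℝ) * I) * ∑ k ∈ s, (ρ k : ℂ) * exp (ψ k * I)).re by
    intro h; simp [h] at this
  rw [Finset.mul_sum, re_sum]
  simp only [re_exp_neg_mul_I_mul_ofReal_mul_exp]
  have hcos : ∀ k ∈ s, 0 < ρ k → 0 < Real.cos (ψ k - (ψ i + ψ j) / 2) := fun k hk hk' => by
    have := hmin k ⟨hk, hk'⟩
    have := hmax k ⟨hk, hk'⟩
    exact Real.cos_pos_of_mem_Ioo ⟨by linarith, by linarith⟩
  refine Finset.sum_pos' (fun k hk => ?_) ⟨i, hi.1, mul_pos hi.2 (hcos i hi.1 hi.2)⟩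
  rcases (hρ k hk).eq_or_lt with h0 | h0
  · simp [← h0]
  · exact (mul_pos h0 (hcos k hk h0)).le

theorem Fin.val_mul_add_sub_val_mul_add_le {m : ℕ} {i j : Fin m} {θ φᵢ φⱼ : ℝ} (hθ : 0 ≤ θ)
    (hφᵢ : φᵢ ≤ m * θ) (hφⱼ : 0 ≤ φⱼ) (hij : j ≤ i → φᵢ ≤ φⱼ) :
    (i * θ + φᵢ) - (j * θ + φⱼ) ≤ (m - 1) * θ := by
  have hi : (i : ℝ) + 1 ≤ m := by exact_mod_cast i.isLt
  rcases lt_or_ge i j with h | h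
  · have h' : (i : ℝ) + 1 ≤ j := by exact_mod_cast h
    nlinarith
  · nlinarith [hij h, Nat.cast_nonneg (α := ℝ) (j : ℕ)]

theorem exists_pow_mul_mul_add_ne_zero {m : ℕ} (hm : 2 ≤ m) {a b : Fin m → ℝ}
    (ha : ∀ k, 0 < a k) (hb : ∀ k, 0 < b k) (hba : StrictMono fun k => b k / a k) (z : ℂ) :
    ∃ k : Fin m, z ^ (k : ℕ) * (a k * z ^ m + b k) ≠ 0 := by
  set k₀ : Fin m := ⟨0, by omega⟩
  set k₁ : Fin m := ⟨1, by omega⟩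
  by_cases h₀ : (a k₀ : ℂ) * z ^ m + b k₀ = 0
  · -- then `z ^ m = -b₀/a₀`, and the next term cannot vanish as `b₁/a₁ ≠ b₀/a₀`
    rw [ofReal_mul_add_ofReal_eq_mul_add_div (ha k₀).ne', mul_eq_zero, ofReal_eq_zero,
      or_iff_right (ha k₀).ne'] at h₀
    have hw := eq_neg_of_add_eq_zero_left h₀
    have hz : z ≠ 0 := by
      rintro rfl
      rw [zero_pow (by omega), zero_eq_neg, ofReal_eq_zero] at hw
      exact (div_pos (hb k₀) (ha k₀)).ne' hw
    refine ⟨k₁, mul_ne_zero (pow_ne_zero _ hz) ?_⟩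
    rw [ofReal_mul_add_ofReal_eq_mul_add_div (ha k₁).ne', hw, neg_add_eq_sub, ← ofReal_sub]
    exact mul_ne_zero (ofReal_ne_zero.2 (ha k₁).ne')
      (ofReal_ne_zero.2 (sub_ne_zero.2 (hba (Fin.mk_lt_mk.2 one_pos)).ne'))
  · exact ⟨k₀, by simpa [k₀] using h₀⟩

theorem sum_pow_mul_mul_add_ne_zero_of_arg_nonneg {m : ℕ} (hm : 2 ≤ m) {a b : Fin m → ℝ}
    (ha : ∀ k, 0 < a k) (hb : ∀ k, 0 < b k) (hba : StrictMono fun k => b k / a k) {z : ℂ}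
    (hz₀ : 0 ≤ arg z) (hz : arg z ≤ π / m) :
    ∑ k : Fin m, z ^ (k : ℕ) * (a k * z ^ m + b k) ≠ 0 := by
  have hmθ : m * arg z ≤ π := by rwa [le_div_iff₀ (by positivity), mul_comm] at hz
  have hspread : (m - 1) * arg z < π := by
    rcases hz₀.eq_or_lt with h | h
    · simp [← h, Real.pi_pos]
    · linarith
  have hw : arg (z ^ m) = m * arg z := arg_pow_of_mul_arg_mem_Ioc
    ⟨by linarith [Real.pi_pos, mul_nonneg (Nat.cast_nonneg m) hz₀], hmθ⟩
  have hw_im : 0 ≤ (z ^ m).im := arg_nonneg_iff.1 (hw ▸ by positivity)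
  rw [Finset.sum_congr rfl fun (k : Fin m) _ => pow_mul_eq_norm_mul_exp z _ k]
  refine Finset.sum_ofReal_mul_exp_ne_zero (fun k _ => norm_nonneg _) ?_ ?_
  · obtain ⟨k, hk⟩ := exists_pow_mul_mul_add_ne_zero hm ha hb hba z
    exact ⟨k, Finset.mem_univ _, norm_pos_iff.2 hk⟩
  · intro i _ j _ hi hj
    have hi' := right_ne_zero_of_mul (norm_pos_iff.1 hi)
    have hj' := right_ne_zero_of_mul (norm_pos_iff.1 hj)
    refine lt_of_le_of_lt (Fin.val_mul_add_sub_val_mul_add_le hz₀ ?_ ?_ ?_) hspread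
    · exact hw ▸ arg_mul_add_le_arg hw_im (ha i) (hb i).le
    · exact arg_nonneg_iff.2 (by simpa using mul_nonneg (ha j).le hw_im)
    · exact fun hji => arg_mul_add_le_of_div_le hw_im (ha i) (ha j) (hba.monotone hji) hi' hj'

theorem sum_pow_mul_mul_add_ne_zero_of_abs_arg_le {m : ℕ} (hm : 2 ≤ m) {a b : Fin m → ℝ}
    (ha : ∀ k, 0 < a k) (hb : ∀ k, 0 < b k) (hba : StrictMono fun k => b k / a k) {z : ℂ}
    (hz : |arg z| ≤ π / m) :
    ∑ k : Fin m, z ^ (k : ℕ) * (a k * z ^ m + b k) ≠ 0 := by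
  rcases le_total 0 (arg z) with h | h
  · exact sum_pow_mul_mul_add_ne_zero_of_arg_nonneg hm ha hb hba h (abs_le.1 hz).2
  · have hconj : arg (conj z) = -arg z := by
      rw [arg_conj, if_neg (by linarith [Real.pi_pos])]
    have := sum_pow_mul_mul_add_ne_zero_of_arg_nonneg hm ha hb hba (z := conj z)
      (by linarith) (by linarith [abs_le.1 hz])
    rw [← map_ne_zero (starRingEnd ℂ), map_sum]
    simpa using this

/-- For a real quintic `f(x) = a₀x⁵ + a₁x⁴ + a₂x³ + a₃x² + a₄x + a₅` with
`a₀, a₁, a₂, a₅ > 0` and `a₃/a₀ > a₄/a₁ > a₅/a₂`, the polynomial `f` does not vanish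
anywhere in the closed sector `|arg z| ≤ π/3` (which contains the origin, since
`arg 0 = 0`). -/
theorem quintic_no_zeros_in_sector
    (a₀ a₁ a₂ a₃ a₄ a₅ : ℝ)
    (h0 : 0 < a₀) (h1 : 0 < a₁) (h2 : 0 < a₂) (h5 : 0 < a₅)
    (h34 : a₄ / a₁ < a₃ / a₀) (h45 : a₅ / a₂ < a₄ / a₁) :
    ∀ z : ℂ, |z.arg| ≤ Real.pi / 3 →
      (a₀ : ℂ) * z ^ 5 + (a₁ : ℂ) * z ^ 4 + (a₂ : ℂ) * z ^ 3 + (a₃ : ℂ) * z ^ 2 +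
          (a₄ : ℂ) * z + (a₅ : ℂ) ≠ 0 := by
  intro z hz
  have h4 : 0 < a₄ := (div_pos_iff_of_pos_right h1).1 ((div_pos h5 h2).trans h45)
  have h3 : 0 < a₃ := (div_pos_iff_of_pos_right h0).1 (((div_pos h5 h2).trans h45).trans h34)
  have key := sum_pow_mul_mul_add_ne_zero_of_abs_arg_le (m := 3) (by norm_num)
    (a := ![a₂, a₁, a₀]) (b := ![a₅, a₄, a₃])
    (by simp [Fin.forall_fin_succ, *]) (by simp [Fin.forall_fin_succ, *])
    (Fin.strictMono_iff_lt_succ.2 (by simp [Fin.forall_fin_succ, h34, h45])) (z := z)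
    (by simpa using hz)
  convert key using 1
  simp only [Fin.sum_univ_three, Fin.isValue, Fin.coe_ofNat_eq_mod, Nat.zero_mod, Nat.one_mod,
    Nat.mod_succ, pow_zero, pow_one, one_mul, Matrix.cons_val_zero, Matrix.cons_val_one,
    Matrix.cons_val]
  ring
end
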